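/- arXiv:1611.05084 — 5 statements merged into one kernel-verified Lean document; each statement's English description precedes it below -/
import Mathlib

section
/- Suppose f : ℝ^m → ℝ^m is bounded by M_f and Lipschitz with constant L_f, g : ℝ → ℝ^m is continuous and bounded by M_g, ‖e^{At}‖ ≤ K e^{-ωt} for t ≥ 0, τ > 0, and ω - 2K L_f e^{ωτ/2} > 0. Then there exists a unique bounded continuous function φ : ℝ → ℝ^m satisfying φ(t) = ∫_{-∞}^t e^{A(t-s)} [f(φ(s-τ)) + g(s)] ds for all t, and it satisfies sup_t ‖φ(t)‖ ≤ K(M_f + M_g)/ω. -/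
/-!
Bounded continuous solutions are exactly the fixed points, in the Banach space `ℝ →ᵇ ℝ^m`, of
`φ ↦ Γ (N φ)`, where `N φ (s) = f (φ (s - τ)) + g s` is `L_f`-Lipschitz in `φ` and
`Γ h (t) = ∫_0^∞ e^{uA} h (t - u) du` is `K/ω`-Lipschitz because `∫_0^∞ K e^{-ωu} du = K/ω`.
Condition (C3) forces `K L_f < ω` (as `e^{ωτ/2} ≥ 1`), so the composite is a contraction and
Banach's fixed point theorem gives existence and uniqueness. The bound is `‖Γ h‖ ≤ K ‖h‖ / ω` applied to
`‖N φ‖ ≤ M_f + M_g`.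
-/

open MeasureTheory Set
open scoped BoundedContinuousFunction NNReal

theorem integral_Iic_eq_integral_Ioi_sub {F : Type*} [NormedAddCommGroup F] [NormedSpace ℝ F]
    (G : ℝ → F) (t : ℝ) : ∫ s in Iic t, G s = ∫ u in Ioi 0, G (t - u) := by
  rw [← integral_Ici_eq_integral_Ioi, ← (Measure.measurePreserving_sub_left volume t)
    |>.setIntegral_preimage_emb (measurableEmbedding_subLeft t) G (Iic t)]
  congr 1
  ext u
  simp

theorem integral_exp_neg_mul_Ioi_zero {ω : ℝ} (hω : 0 < ω) :
    ∫ u in Ioi 0, Real.exp (-ω * u) = ω⁻¹ := by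
  rw [integral_exp_mul_Ioi (neg_neg_of_pos hω)]
  simp

theorem mul_toNNReal_lt_of_delay_condition {K L ω τ : ℝ} (hω : 0 < ω) (hτ : 0 ≤ τ)
    (h : 0 < ω - 2 * K * L * Real.exp (ω * τ / 2)) : K * L.toNNReal < ω := by
  rw [Real.coe_toNNReal']
  rcases le_total L 0 with hL | hL
  · simpa [max_eq_right hL] using hω
  · have hexp : 1 ≤ Real.exp (ω * τ / 2) := Real.one_le_exp (by positivity)
    rw [max_eq_left hL]
    nlinarith

def HasExpDecay {E : Type*} [NormedAddCommGroup E] [NormedSpace ℝ E] (U : ℝ → E →L[ℝ] E)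
    (K ω : ℝ) : Prop :=
  ∀ u, 0 ≤ u → ‖U u‖ ≤ K * Real.exp (-ω * u)

namespace BoundedContinuousFunction

variable {E : Type*} [NormedAddCommGroup E] {L : ℝ≥0} {f : E → E}

def delayedForcing (hf : LipschitzWith L f) (τ : ℝ) (g φ : ℝ →ᵇ E) : ℝ →ᵇ E :=
  (φ.compContinuous ⟨fun s => s - τ, by fun_prop⟩).comp f hf + g

theorem lipschitzWith_delayedForcing (hf : LipschitzWith L f) (τ : ℝ) (g : ℝ →ᵇ E) :
    LipschitzWith L (delayedForcing hf τ g) := by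
  have hcomp := (lipschitz_comp (α := ℝ) hf).comp
    (lipschitz_compContinuous (β := E) ⟨fun s : ℝ => s - τ, by fun_prop⟩)
  rw [mul_one] at hcomp
  exact LipschitzWith.of_dist_le_mul fun φ ψ => by
    simpa only [delayedForcing, dist_add_right, Function.comp_apply] using hcomp.dist_le_mul φ ψ

end BoundedContinuousFunction

section CausalConvolution

variable {E : Type*} [NormedAddCommGroup E] [NormedSpace ℝ E] {U : ℝ → E →L[ℝ] E} {K ω : ℝ}

/-- `∫_{-∞}^t U (t - s) (h s) ds`, written after the substitution `s = t - u`. -/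
noncomputable def causalConvolution (U : ℝ → E →L[ℝ] E) (h : ℝ → E) (t : ℝ) : E :=
  ∫ u in Ioi 0, U u (h (t - u))

theorem integral_Iic_eq_causalConvolution (U : ℝ → E →L[ℝ] E) (h : ℝ → E) (t : ℝ) :
    ∫ s in Iic t, U (t - s) (h s) = causalConvolution U h t := by
  simp only [integral_Iic_eq_integral_Ioi_sub (fun s => U (t - s) (h s)), sub_sub_cancel]
  rfl

theorem HasExpDecay.ae_norm_apply_le (hUK : HasExpDecay U K ω) {h : ℝ → E} {C : ℝ}
    (hC : ∀ s, ‖h s‖ ≤ C) (t : ℝ) :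
    ∀ᵐ u ∂volume.restrict (Ioi 0), ‖U u (h (t - u))‖ ≤ K * C * Real.exp (-ω * u) := by
  filter_upwards [ae_restrict_mem measurableSet_Ioi] with u hu
  calc ‖U u (h (t - u))‖ ≤ ‖U u‖ * ‖h (t - u)‖ := (U u).le_opNorm _
    _ ≤ K * Real.exp (-ω * u) * C :=
        mul_le_mul (hUK u hu.le) (hC _) (norm_nonneg _) ((norm_nonneg _).trans (hUK u hu.le))
    _ = K * C * Real.exp (-ω * u) := by ring

theorem norm_causalConvolution_le (hUK : HasExpDecay U K ω) (hω : 0 < ω) {h : ℝ → E} {C : ℝ}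
    (hC : ∀ s, ‖h s‖ ≤ C) (t : ℝ) :
    ‖causalConvolution U h t‖ ≤ K * C / ω :=
  calc ‖causalConvolution U h t‖ ≤ ∫ u in Ioi 0, K * C * Real.exp (-ω * u) :=
        norm_integral_le_of_norm_le ((exp_neg_integrableOn_Ioi 0 hω).const_mul _)
          (hUK.ae_norm_apply_le hC t)
    _ = K * C / ω := by rw [integral_const_mul, integral_exp_neg_mul_Ioi_zero hω, div_eq_mul_inv]

theorem integrableOn_causalConvolution_integrand (hU : Continuous U) (hUK : HasExpDecay U K ω)
    (hω : 0 < ω) {h : ℝ → E} (hh : Continuous h) {C : ℝ} (hC : ∀ s, ‖h s‖ ≤ C) (t : ℝ) :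
    IntegrableOn (fun u => U u (h (t - u))) (Ioi 0) :=
  ((exp_neg_integrableOn_Ioi 0 hω).const_mul (K * C)).mono'
    (hU.clm_apply (hh.comp (continuous_const.sub continuous_id))).aestronglyMeasurable
    (hUK.ae_norm_apply_le hC t)

theorem continuous_causalConvolution (hU : Continuous U) (hUK : HasExpDecay U K ω) (hω : 0 < ω)
    {h : ℝ → E} (hh : Continuous h) {C : ℝ} (hC : ∀ s, ‖h s‖ ≤ C) :
    Continuous (causalConvolution U h) :=
  continuous_of_dominated
    (fun _ => (hU.clm_apply (hh.comp (continuous_const.sub continuous_id))).aestronglyMeasurable)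
    (hUK.ae_norm_apply_le hC) ((exp_neg_integrableOn_Ioi 0 hω).const_mul _)
    (ae_of_all _ fun u => (U u).continuous.comp (hh.comp (continuous_id.sub continuous_const)))

namespace BoundedContinuousFunction

noncomputable def causalConvolution (hU : Continuous U) (hUK : HasExpDecay U K ω) (hω : 0 < ω)
    (h : ℝ →ᵇ E) : ℝ →ᵇ E :=
  ofNormedAddCommGroup (_root_.causalConvolution U h)
    (continuous_causalConvolution hU hUK hω h.continuous h.norm_coe_le_norm) (K * ‖h‖ / ω)
    (norm_causalConvolution_le hUK hω h.norm_coe_le_norm)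

theorem causalConvolution_apply (hU : Continuous U) (hUK : HasExpDecay U K ω) (hω : 0 < ω)
    (h : ℝ →ᵇ E) (t : ℝ) :
    causalConvolution hU hUK hω h t = _root_.causalConvolution U h t :=
  rfl

theorem causalConvolution_sub (hU : Continuous U) (hUK : HasExpDecay U K ω) (hω : 0 < ω)
    (h₁ h₂ : ℝ →ᵇ E) :
    causalConvolution hU hUK hω h₁ - causalConvolution hU hUK hω h₂ =
      causalConvolution hU hUK hω (h₁ - h₂) := by
  ext t
  simp only [coe_sub, Pi.sub_apply, causalConvolution_apply, _root_.causalConvolution, map_sub]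
  rw [integral_sub]
  · exact integrableOn_causalConvolution_integrand hU hUK hω h₁.continuous h₁.norm_coe_le_norm t
  · exact integrableOn_causalConvolution_integrand hU hUK hω h₂.continuous h₂.norm_coe_le_norm t

theorem lipschitzWith_causalConvolution (hU : Continuous U) (hUK : HasExpDecay U K ω)
    (hω : 0 < ω) : LipschitzWith (K / ω).toNNReal (causalConvolution hU hUK hω) :=
  LipschitzWith.of_dist_le' fun h₁ h₂ => by
    rw [dist_eq_norm, causalConvolution_sub, dist_eq_norm, norm_le_of_nonempty]
    intro t
    calc _ ≤ K * ‖h₁ - h₂‖ / ω := norm_causalConvolution_le hUK hω (h₁ - h₂).norm_coe_le_norm t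
      _ = K / ω * ‖h₁ - h₂‖ := by ring

theorem contractingWith_causalConvolution_delayedForcing {L : ℝ≥0} {f : E → E}
    (hU : Continuous U) (hUK : HasExpDecay U K ω) (hω : 0 < ω) (hf : LipschitzWith L f)
    (τ : ℝ) (g : ℝ →ᵇ E) (hKL : K * L < ω) :
    ContractingWith ((K / ω).toNNReal * L)
      fun φ => causalConvolution hU hUK hω (delayedForcing hf τ g φ) := by
  have hK : 0 ≤ K := by simpa using (norm_nonneg _).trans (hUK 0 le_rfl)
  refine ⟨?_, (lipschitzWith_causalConvolution hU hUK hω).comp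
    (lipschitzWith_delayedForcing hf τ g)⟩
  rw [← NNReal.coe_lt_coe, NNReal.coe_mul, Real.coe_toNNReal _ (div_nonneg hK hω.le),
    NNReal.coe_one, div_mul_eq_mul_div, div_lt_one hω]
  exact hKL

end BoundedContinuousFunction

end CausalConvolution

theorem unpredictable_stmt3_general {m : ℕ}
    (A : EuclideanSpace ℝ (Fin m) →L[ℝ] EuclideanSpace ℝ (Fin m))
    (f : EuclideanSpace ℝ (Fin m) → EuclideanSpace ℝ (Fin m))
    (g : ℝ → EuclideanSpace ℝ (Fin m))
    (Mf Lf Mg K ω τ : ℝ)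
    (hMf : ∀ x, ‖f x‖ ≤ Mf)
    (hLf : ∀ x y, ‖f x - f y‖ ≤ Lf * ‖x - y‖)
    (hgc : Continuous g) (hMg : ∀ t, ‖g t‖ ≤ Mg)
    (hω : 0 < ω) (hτ : 0 < τ)
    (hC3 : 0 < ω - 2 * K * Lf * Real.exp (ω * τ / 2))
    (hA : ∀ t : ℝ, 0 ≤ t → ‖NormedSpace.exp (t • A)‖ ≤ K * Real.exp (-ω * t)) :
    ∃ φ : ℝ → EuclideanSpace ℝ (Fin m),
      Continuous φ ∧ (∃ C, ∀ t, ‖φ t‖ ≤ C) ∧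
      (∀ t, φ t = ∫ s in Set.Iic t,
        NormedSpace.exp ((t - s) • A) (f (φ (s - τ)) + g s)) ∧
      (∀ t, ‖φ t‖ ≤ K * (Mf + Mg) / ω) ∧
      (∀ ψ : ℝ → EuclideanSpace ℝ (Fin m), Continuous ψ → (∃ C, ∀ t, ‖ψ t‖ ≤ C) →
        (∀ t, ψ t = ∫ s in Set.Iic t,
          NormedSpace.exp ((t - s) • A) (f (ψ (s - τ)) + g s)) → ψ = φ) := by
  have hU : Continuous fun u : ℝ => NormedSpace.exp (u • A) :=
    continuous_iff_continuousAt.2 fun t => (hasDerivAt_exp_smul_const A t).continuousAt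
  have hf : LipschitzWith Lf.toNNReal f :=
    LipschitzWith.of_dist_le' fun x y => by simpa only [dist_eq_norm] using hLf x y
  let gb := BoundedContinuousFunction.ofNormedAddCommGroup g hgc Mg hMg
  have hΦ := BoundedContinuousFunction.contractingWith_causalConvolution_delayedForcing hU hA hω
    hf τ gb (mul_toNNReal_lt_of_delay_condition hω hτ.le hC3)
  set Φ := fun φ => BoundedContinuousFunction.causalConvolution hU hA hω
    (BoundedContinuousFunction.delayedForcing hf τ gb φ)
  have hsol (φ : ℝ →ᵇ EuclideanSpace ℝ (Fin m)) :
      (∀ t, φ t = ∫ s in Set.Iic t, NormedSpace.exp ((t - s) • A) (f (φ (s - τ)) + g s)) ↔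
        Φ φ = φ := by
    simp only [integral_Iic_eq_causalConvolution (fun u => NormedSpace.exp (u • A)),
      BoundedContinuousFunction.ext_iff, eq_comm]
    rfl
  obtain ⟨φ, hfix⟩ : ∃ φ, Φ φ = φ := ⟨_, hΦ.fixedPoint_isFixedPt⟩
  refine ⟨φ, φ.continuous, ⟨‖φ‖, φ.norm_coe_le_norm⟩, (hsol φ).2 hfix, fun t => ?_,
    fun ψ hψ ⟨C, hC⟩ hψeq => ?_⟩
  · rw [← hfix]
    exact norm_causalConvolution_le hA hω
      (fun s => (norm_add_le _ _).trans (add_le_add (hMf _) (hMg s))) t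
  · exact congrArg DFunLike.coe
      (hΦ.fixedPoint_unique' ((hsol (.ofNormedAddCommGroup ψ hψ C hC)).1 hψeq) hfix)

/-- Under conditions (C1)-(C3) there exists a unique bounded continuous solution of the
integral equation `φ(t) = ∫_{-∞}^t e^{(t-s)A} [f(φ(s-τ)) + g(s)] ds`, and it satisfies
`sup_t ‖φ(t)‖ ≤ K (M_f + M_g) / ω`. -/
theorem unpredictable_stmt3 {m : ℕ}
    (A : EuclideanSpace ℝ (Fin m) →L[ℝ] EuclideanSpace ℝ (Fin m))
    (f : EuclideanSpace ℝ (Fin m) → EuclideanSpace ℝ (Fin m))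
    (g : ℝ → EuclideanSpace ℝ (Fin m))
    (Mf Lf Mg K ω τ : ℝ)
    (hMf : ∀ x, ‖f x‖ ≤ Mf)
    (hLf : ∀ x y, ‖f x - f y‖ ≤ Lf * ‖x - y‖)
    (hgc : Continuous g) (hMg : ∀ t, ‖g t‖ ≤ Mg)
    (hK : 1 ≤ K) (hω : 0 < ω) (hτ : 0 < τ)
    (hC3 : 0 < ω - 2 * K * Lf * Real.exp (ω * τ / 2))
    (hA : ∀ t : ℝ, 0 ≤ t → ‖NormedSpace.exp (t • A)‖ ≤ K * Real.exp (-ω * t)) :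
    ∃ φ : ℝ → EuclideanSpace ℝ (Fin m),
      Continuous φ ∧ (∃ C, ∀ t, ‖φ t‖ ≤ C) ∧
      (∀ t, φ t = ∫ s in Set.Iic t,
        NormedSpace.exp ((t - s) • A) (f (φ (s - τ)) + g s)) ∧
      (∀ t, ‖φ t‖ ≤ K * (Mf + Mg) / ω) ∧
      (∀ ψ : ℝ → EuclideanSpace ℝ (Fin m), Continuous ψ → (∃ C, ∀ t, ‖ψ t‖ ≤ C) →
        (∀ t, ψ t = ∫ s in Set.Iic t,
          NormedSpace.exp ((t - s) • A) (f (ψ (s - τ)) + g s)) → ψ = φ) :=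
  unpredictable_stmt3_general A f g Mf Lf Mg K ω τ hMf hLf hgc hMg hω hτ hC3 hA
end

section
/- Suppose conditions (C1)–(C3) hold and g : ℝ → ℝ^m is unpredictable. Then the unique bounded solution φ of x'(t) = A x(t) + f(x(t-τ)) + g(t) has the property that ‖φ(t + t_n) - φ(t)‖ → 0 as n → ∞ uniformly on every compact subset [α, β] of ℝ, where {t_n} is the sequence from the unpredictability of g. -/
/-!
Write `Δ(t) = φ(t + tₙ) - φ(t)`. Shifting the integral equation, `Δ` is the convolution of the
kernel `e^{(t-s)A}`, of norm at most `K e^{-ω(t-s)}`, with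
`f(φ(s + tₙ - τ)) - f(φ(s - τ)) + g(s + tₙ) - g(s)`. The part of the integral older than `t - R`
contributes `O(e^{-ωR})`; on the window `(t - R, t]` the forcing is at most `L ‖Δ(s - τ)‖` plus the
small `g`-difference, which is uniformly small on compacts for large `n`. So a bound `b` for `‖Δ‖`
on an interval improves to `η + (K L / ω) b` on the interval shortened by `R + τ`, and
`K L / ω < 1` by (C3). Starting from `‖Δ‖ ≤ 2 sup ‖φ‖` and iterating `k` times gives the claim.
-/

open MeasureTheory Filter Set Topology

section Kernel

variable {E : Type*} [NormedAddCommGroup E]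

lemma integrableOn_exp_neg_mul_sub {ω : ℝ} (hω : 0 < ω) (t c : ℝ) :
    IntegrableOn (fun s => Real.exp (-ω * (t - s))) (Iic c) := by
  simp_rw [show ∀ s, -ω * (t - s) = -ω * t + ω * s by intro s; ring, Real.exp_add]
  exact (integrableOn_exp_mul_Iic hω c).const_mul _

lemma integral_Iic_exp_neg_mul_sub {ω : ℝ} (hω : 0 < ω) (t c : ℝ) :
    ∫ s in Iic c, Real.exp (-ω * (t - s)) = Real.exp (-ω * (t - c)) / ω := by
  simp_rw [show ∀ s, -ω * (t - s) = -ω * t + ω * s by intro s; ring, Real.exp_add]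
  rw [integral_const_mul, integral_exp_mul_Iic hω, mul_div_assoc]

lemma integrableOn_exp_neg_mul_sub_mul_norm {ω B : ℝ} (hω : 0 < ω) {u : ℝ → E}
    (hu : AEStronglyMeasurable u) (huB : ∀ s, ‖u s‖ ≤ B) (t c : ℝ) :
    IntegrableOn (fun s => Real.exp (-ω * (t - s)) * ‖u s‖) (Iic c) := by
  refine ((integrableOn_exp_neg_mul_sub hω t c).mul_const B).mono'
    ((by fun_prop : Continuous fun s => Real.exp (-ω * (t - s))).aestronglyMeasurable.mul
      hu.norm).restrict (ae_of_all _ fun s => ?_)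
  rw [norm_mul, Real.norm_of_nonneg (Real.exp_pos _).le, norm_norm]
  exact mul_le_mul_of_nonneg_left (huB s) (Real.exp_pos _).le

lemma integral_Iic_exp_neg_mul_sub_mul_norm_le {ω R B b t : ℝ} (hω : 0 < ω) (hR : 0 ≤ R)
    (hb : 0 ≤ b) {u : ℝ → E} (hu : AEStronglyMeasurable u) (huB : ∀ s, ‖u s‖ ≤ B)
    (hub : ∀ s ∈ Ioc (t - R) t, ‖u s‖ ≤ b) :
    ∫ s in Iic t, Real.exp (-ω * (t - s)) * ‖u s‖ ≤ (B * Real.exp (-ω * R) + b) / ω := by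
  have hker := integrableOn_exp_neg_mul_sub hω t
  have hint := integrableOn_exp_neg_mul_sub_mul_norm hω hu huB t t
  have hsub : Iic (t - R) ⊆ Iic t := Iic_subset_Iic.2 (sub_le_self t hR)
  rw [← Iic_union_Ioc_eq_Iic (sub_le_self t hR), setIntegral_union (Iic_disjoint_Ioc le_rfl)
    measurableSet_Ioc (hint.mono_set hsub) (hint.mono_set Ioc_subset_Iic_self), add_div]
  have hpast : ∫ s in Iic (t - R), Real.exp (-ω * (t - s)) * ‖u s‖ ≤
      B * Real.exp (-ω * R) / ω := calc
    _ ≤ ∫ s in Iic (t - R), B * Real.exp (-ω * (t - s)) :=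
        setIntegral_mono_on (hint.mono_set hsub) ((hker _).const_mul B) measurableSet_Iic
          fun s _ => by rw [mul_comm B]; exact mul_le_mul_of_nonneg_left (huB s) (by positivity)
    _ = B * Real.exp (-ω * R) / ω := by
        rw [integral_const_mul, integral_Iic_exp_neg_mul_sub hω, sub_sub_cancel, mul_div_assoc]
  have hwindow : ∫ s in Ioc (t - R) t, Real.exp (-ω * (t - s)) * ‖u s‖ ≤ b / ω := calc
    _ ≤ ∫ s in Ioc (t - R) t, b * Real.exp (-ω * (t - s)) :=
        setIntegral_mono_on (hint.mono_set Ioc_subset_Iic_self)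
          (((hker t).mono_set Ioc_subset_Iic_self).const_mul b) measurableSet_Ioc
          fun s hs => by rw [mul_comm b]; exact mul_le_mul_of_nonneg_left (hub s hs) (by positivity)
    _ ≤ ∫ s in Iic t, b * Real.exp (-ω * (t - s)) :=
        setIntegral_mono_set ((hker t).const_mul b) (ae_of_all _ fun s => by positivity)
          Ioc_subset_Iic_self.eventuallyLE
    _ = b / ω := by
        rw [integral_const_mul, integral_Iic_exp_neg_mul_sub hω, sub_self, mul_zero,
          Real.exp_zero, mul_one_div]
  exact add_le_add hpast hwindow

end Kernel

/-- `r ^ k * D + η / (1 - r)` is the `k`-th iterate of `b ↦ η + r * b` from `D + η / (1 - r)`;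
each iteration loses `R + τ` on the left of the interval. -/
lemma le_pow_mul_add_div_of_delay_step {d : ℝ → ℝ} {D η r R τ a β : ℝ} (hR : 0 ≤ R)
    (hτ : 0 ≤ τ) (hD : 0 ≤ D) (hη : 0 ≤ η) (hr0 : 0 ≤ r) (hr1 : r < 1) (hdD : ∀ t, d t ≤ D)
    (hstep : ∀ t ∈ Icc a β, ∀ b, 0 ≤ b → (∀ s ∈ Ioc (t - R) t, d (s - τ) ≤ b) →
      d t ≤ η + r * b) (k : ℕ) :
    ∀ t ∈ Icc (a + k * (R + τ)) β, d t ≤ r ^ k * D + η / (1 - r) := by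
  have h1r : 0 < 1 - r := sub_pos.2 hr1
  induction k with
  | zero =>
    intro t _
    simpa using (hdD t).trans (le_add_of_nonneg_right (div_nonneg hη h1r.le))
  | succ k ih =>
    rintro t ⟨hat, htβ⟩
    push_cast at hat
    have hkRτ : 0 ≤ (k : ℝ) * (R + τ) := by positivity
    refine (hstep t ⟨by linarith, htβ⟩ _ (by positivity)
      fun s hs => ih (s - τ) ⟨by linarith [hs.1], by linarith [hs.2]⟩).trans_eq ?_
    field_simp
    ring

section VariationOfConstants

variable {E : Type*} [NormedAddCommGroup E] [NormedSpace ℝ E]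
  {T : ℝ → E →L[ℝ] E} {K ω M : ℝ}

lemma nonneg_of_norm_le_mul_exp_neg (hTb : ∀ t, 0 ≤ t → ‖T t‖ ≤ K * Real.exp (-ω * t)) :
    0 ≤ K :=
  (norm_nonneg _).trans (by simpa using hTb 0 le_rfl)

lemma setIntegral_Iic_comp_add_right (Φ : ℝ → E) (c θ : ℝ) :
    ∫ s in Iic c, Φ (s + θ) = ∫ s in Iic (c + θ), Φ s := by
  rw [← (measurePreserving_add_right volume θ).setIntegral_preimage_emb
    (measurableEmbedding_addRight θ) Φ (Iic (c + θ)), preimage_add_const_Iic, add_sub_cancel_right]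

lemma integrableOn_Iic_apply_sub (hT : Continuous T)
    (hTb : ∀ t, 0 ≤ t → ‖T t‖ ≤ K * Real.exp (-ω * t)) (hω : 0 < ω) {F : ℝ → E}
    (hF : Continuous F) (hFM : ∀ s, ‖F s‖ ≤ M) (t : ℝ) :
    IntegrableOn (fun s => T (t - s) (F s)) (Iic t) := by
  refine ((integrableOn_exp_neg_mul_sub hω t t).const_mul (K * M)).mono'
    ((hT.comp (continuous_const.sub continuous_id)).clm_apply hF).aestronglyMeasurable ?_
  filter_upwards [self_mem_ae_restrict measurableSet_Iic] with s hs
  have hTs := hTb _ (sub_nonneg.2 hs)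
  calc ‖T (t - s) (F s)‖ ≤ ‖T (t - s)‖ * ‖F s‖ := (T (t - s)).le_opNorm _
    _ ≤ K * Real.exp (-ω * (t - s)) * M :=
        mul_le_mul hTs (hFM s) (norm_nonneg _) ((norm_nonneg _).trans hTs)
    _ = K * M * Real.exp (-ω * (t - s)) := by ring

lemma norm_integral_Iic_sub_le (hT : Continuous T)
    (hTb : ∀ t, 0 ≤ t → ‖T t‖ ≤ K * Real.exp (-ω * t)) (hω : 0 < ω) {F G : ℝ → E}
    (hF : Continuous F) (hG : Continuous G) (hFM : ∀ s, ‖F s‖ ≤ M) (hGM : ∀ s, ‖G s‖ ≤ M)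
    (t : ℝ) :
    ‖(∫ s in Iic t, T (t - s) (F s)) - ∫ s in Iic t, T (t - s) (G s)‖ ≤
      K * ∫ s in Iic t, Real.exp (-ω * (t - s)) * ‖F s - G s‖ := by
  rw [← integral_sub (integrableOn_Iic_apply_sub hT hTb hω hF hFM t)
    (integrableOn_Iic_apply_sub hT hTb hω hG hGM t), ← integral_const_mul]
  have hFG : ∀ s, ‖F s - G s‖ ≤ M + M := fun s =>
    (norm_sub_le _ _).trans (add_le_add (hFM s) (hGM s))
  refine norm_integral_le_of_norm_le ((integrableOn_exp_neg_mul_sub_mul_norm hω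
    (hF.sub hG).aestronglyMeasurable hFG t t).const_mul K) ?_
  filter_upwards [self_mem_ae_restrict measurableSet_Iic] with s hs
  rw [← map_sub, ← mul_assoc]
  exact ((T _).le_opNorm _).trans
    (mul_le_mul_of_nonneg_right (hTb _ (sub_nonneg.2 hs)) (norm_nonneg _))

lemma norm_integral_Iic_shift_sub_le (hT : Continuous T)
    (hTb : ∀ t, 0 ≤ t → ‖T t‖ ≤ K * Real.exp (-ω * t)) (hω : 0 < ω) {F : ℝ → E}
    (hF : Continuous F) (hFM : ∀ s, ‖F s‖ ≤ M) {θ t R b : ℝ} (hR : 0 ≤ R) (hb : 0 ≤ b)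
    (hFb : ∀ s ∈ Ioc (t - R) t, ‖F (s + θ) - F s‖ ≤ b) :
    ‖(∫ s in Iic (t + θ), T (t + θ - s) (F s)) - ∫ s in Iic t, T (t - s) (F s)‖ ≤
      K * (2 * M * Real.exp (-ω * R) + b) / ω := by
  have hK := nonneg_of_norm_le_mul_exp_neg hTb
  rw [← setIntegral_Iic_comp_add_right]
  simp_rw [add_sub_add_right_eq_sub]
  calc _ ≤ K * ∫ s in Iic t, Real.exp (-ω * (t - s)) * ‖F (s + θ) - F s‖ :=
        norm_integral_Iic_sub_le hT hTb hω (hF.comp (continuous_add_const θ)) hF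
          (fun s => hFM _) hFM t
    _ ≤ K * ((M + M) * Real.exp (-ω * R) + b) / ω := by
        rw [mul_div_assoc]
        exact mul_le_mul_of_nonneg_left (integral_Iic_exp_neg_mul_sub_mul_norm_le hω hR hb
          ((hF.comp (continuous_add_const θ)).sub hF).aestronglyMeasurable
          (fun s => (norm_sub_le _ _).trans (add_le_add (hFM _) (hFM s))) hFb) hK
    _ = K * (2 * M * Real.exp (-ω * R) + b) / ω := by ring

lemma norm_sub_shift_le_of_delay (hT : Continuous T)
    (hTb : ∀ t, 0 ≤ t → ‖T t‖ ≤ K * Real.exp (-ω * t)) (hω : 0 < ω) {f : E → E} {g φ : ℝ → E}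
    {L τ : ℝ} (hf : ∀ x y, ‖f x - f y‖ ≤ L * ‖x - y‖) (hL : 0 ≤ L)
    (hF : Continuous fun s => f (φ (s - τ)) + g s) (hFM : ∀ s, ‖f (φ (s - τ)) + g s‖ ≤ M)
    (hφ : ∀ t, φ t = ∫ s in Iic t, T (t - s) (f (φ (s - τ)) + g s))
    {θ t R b ε : ℝ} (hR : 0 ≤ R) (hb : 0 ≤ b) (hε : 0 ≤ ε)
    (hφb : ∀ s ∈ Ioc (t - R) t, ‖φ (s - τ + θ) - φ (s - τ)‖ ≤ b)
    (hgε : ∀ s ∈ Ioc (t - R) t, ‖g (s + θ) - g s‖ ≤ ε) :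
    ‖φ (t + θ) - φ t‖ ≤ K * (2 * M * Real.exp (-ω * R) + ε) / ω + K * L / ω * b := by
  rw [hφ (t + θ), hφ t]
  refine (norm_integral_Iic_shift_sub_le hT hTb hω hF hFM hR (by positivity : 0 ≤ L * b + ε)
    fun s hs => ?_).trans_eq (by ring)
  rw [add_sub_right_comm s θ τ, add_sub_add_comm]
  exact (norm_add_le _ _).trans (add_le_add
    ((hf _ _).trans (mul_le_mul_of_nonneg_left (hφb s hs) hL)) (hgε s hs))

theorem exists_forall_norm_shift_sub_lt_of_delay (hT : Continuous T)
    (hTb : ∀ t, 0 ≤ t → ‖T t‖ ≤ K * Real.exp (-ω * t)) (hω : 0 < ω) {f : E → E} {g φ : ℝ → E}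
    {L τ C : ℝ} (hf : ∀ x y, ‖f x - f y‖ ≤ L * ‖x - y‖) (hL : 0 ≤ L) (hτ : 0 ≤ τ)
    (hr : K * L / ω < 1) (hF : Continuous fun s => f (φ (s - τ)) + g s)
    (hFM : ∀ s, ‖f (φ (s - τ)) + g s‖ ≤ M) (hφC : ∀ t, ‖φ t‖ ≤ C)
    (hφ : ∀ t, φ t = ∫ s in Iic t, T (t - s) (f (φ (s - τ)) + g s)) {tseq : ℕ → ℝ}
    (hconv : ∀ α β : ℝ, ∀ ε > (0:ℝ), ∃ N : ℕ, ∀ n ≥ N, ∀ t ∈ Icc α β,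
      ‖g (t + tseq n) - g t‖ < ε)
    (α β ε : ℝ) (hε : 0 < ε) :
    ∃ N : ℕ, ∀ n ≥ N, ∀ t ∈ Icc α β, ‖φ (t + tseq n) - φ t‖ < ε := by
  have hK := nonneg_of_norm_le_mul_exp_neg hTb
  have hM : 0 ≤ M := (norm_nonneg _).trans (hFM 0)
  have hC : 0 ≤ C := (norm_nonneg _).trans (hφC 0)
  have hexp : Tendsto (fun k : ℕ => Real.exp (-ω * k)) atTop (𝓝 0) :=
    Real.tendsto_exp_atBot.comp
      (tendsto_natCast_atTop_atTop.const_mul_atTop_of_neg (neg_lt_zero.2 hω))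
  -- The window length `R = k` and the tolerance `exp (-ω k)` for `g` are both driven by `k`.
  have hlim : Tendsto (fun k : ℕ => (K * L / ω) ^ k * (2 * C) +
      K * (2 * M * Real.exp (-ω * k) + Real.exp (-ω * k)) / ω / (1 - K * L / ω))
      atTop (𝓝 0) := by
    simpa using ((tendsto_pow_atTop_nhds_zero_of_lt_one (by positivity) hr).mul_const _).add
      (((((hexp.const_mul (2 * M)).add hexp).const_mul K).div_const ω).div_const _)
  obtain ⟨k, hk⟩ := (hlim.eventually (gt_mem_nhds hε)).exists
  obtain ⟨N, hN⟩ := hconv (α - k * (k + τ) - k) β _ (Real.exp_pos (-ω * k))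
  refine ⟨N, fun n hn t ht => lt_of_le_of_lt ?_ hk⟩
  refine le_pow_mul_add_div_of_delay_step (d := fun t => ‖φ (t + tseq n) - φ t‖)
    (a := α - k * (k + τ)) k.cast_nonneg hτ (by positivity) (by positivity) (by positivity) hr
    (fun t => (norm_sub_le _ _).trans (by linarith [hφC (t + tseq n), hφC t]))
    (fun t ht' b hb hΔb => ?_) k t ⟨by linarith [ht.1], ht.2⟩
  exact norm_sub_shift_le_of_delay hT hTb hω hf hL hF hFM hφ k.cast_nonneg hb
    (Real.exp_pos _).le hΔb
    fun s hs => (hN n hn s ⟨by linarith [hs.1, ht'.1], hs.2.trans ht'.2⟩).le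

end VariationOfConstants

theorem unpredictable_stmt10_general {m : ℕ}
    (A : EuclideanSpace ℝ (Fin m) →L[ℝ] EuclideanSpace ℝ (Fin m))
    (f : EuclideanSpace ℝ (Fin m) → EuclideanSpace ℝ (Fin m))
    (g : ℝ → EuclideanSpace ℝ (Fin m))
    (Mf Lf Mg K ω τ : ℝ)
    (hMf : ∀ x, ‖f x‖ ≤ Mf)
    (hLf : ∀ x y, ‖f x - f y‖ ≤ Lf * ‖x - y‖)
    (hω : 0 < ω) (hτ : 0 < τ)
    (hC3 : 0 < ω - 2 * K * Lf * Real.exp (ω * τ / 2))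
    (hA : ∀ t : ℝ, 0 ≤ t → ‖NormedSpace.exp (t • A)‖ ≤ K * Real.exp (-ω * t))
    -- g is unpredictable with sequences {t_n}, {u_n}
    (hgu : UniformContinuous g) (hMg : ∀ t, ‖g t‖ ≤ Mg)
    (tseq : ℕ → ℝ)
    (hconv : ∀ α β : ℝ, ∀ ε > (0:ℝ), ∃ N : ℕ, ∀ n ≥ N, ∀ t ∈ Set.Icc α β,
      ‖g (t + tseq n) - g t‖ < ε)
    -- φ is the bounded solution
    (φ : ℝ → EuclideanSpace ℝ (Fin m)) (hφc : Continuous φ) (hφb : ∃ C, ∀ t, ‖φ t‖ ≤ C)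
    (hφ : ∀ t, φ t = ∫ s in Set.Iic t,
      NormedSpace.exp ((t - s) • A) (f (φ (s - τ)) + g s)) :
    ∀ α β : ℝ, ∀ ε > (0:ℝ), ∃ N : ℕ, ∀ n ≥ N, ∀ t ∈ Set.Icc α β,
      ‖φ (t + tseq n) - φ t‖ < ε := by
  intro α β ε hε
  obtain ⟨C, hC⟩ := hφb
  have hK := nonneg_of_norm_le_mul_exp_neg hA
  have hfL : ∀ x y, ‖f x - f y‖ ≤ max Lf 0 * ‖x - y‖ := fun x y =>
    (hLf x y).trans (mul_le_mul_of_nonneg_right (le_max_left _ _) (norm_nonneg _))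
  have hr : K * max Lf 0 / ω < 1 := by
    rw [div_lt_one hω]
    rcases le_total Lf 0 with h | h
    · simpa [max_eq_right h] using hω
    · have : 1 ≤ Real.exp (ω * τ / 2) := Real.one_le_exp (by positivity)
      rw [max_eq_left h]
      nlinarith [mul_nonneg hK h]
  have hF : Continuous fun s => f (φ (s - τ)) + g s :=
    ((LipschitzWith.of_dist_le' (by simpa only [dist_eq_norm] using hLf)).continuous.comp
      (hφc.comp (continuous_sub_right τ))).add hgu.continuous
  exact exists_forall_norm_shift_sub_lt_of_delay (differentiable_exp_smul_const ℝ A).continuous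
    hA hω hfL (le_max_right _ _) hτ.le hr hF
    (fun s => (norm_add_le _ _).trans (add_le_add (hMf _) (hMg s))) hC hφ hconv α β ε hε

/-- Under (C1)-(C3), if `g` is unpredictable with convergence sequence `{t_n}`, then the
bounded solution `φ` of `x' = Ax + f(x(t-τ)) + g(t)` satisfies
`‖φ(t + t_n) - φ(t)‖ → 0` uniformly on every compact interval `[α, β]`. -/
theorem unpredictable_stmt10 {m : ℕ}
    (A : EuclideanSpace ℝ (Fin m) →L[ℝ] EuclideanSpace ℝ (Fin m))
    (f : EuclideanSpace ℝ (Fin m) → EuclideanSpace ℝ (Fin m))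
    (g : ℝ → EuclideanSpace ℝ (Fin m))
    (Mf Lf Mg K ω τ : ℝ)
    (hMf : ∀ x, ‖f x‖ ≤ Mf)
    (hLf : ∀ x y, ‖f x - f y‖ ≤ Lf * ‖x - y‖)
    (hK : 1 ≤ K) (hω : 0 < ω) (hτ : 0 < τ)
    (hC3 : 0 < ω - 2 * K * Lf * Real.exp (ω * τ / 2))
    (hA : ∀ t : ℝ, 0 ≤ t → ‖NormedSpace.exp (t • A)‖ ≤ K * Real.exp (-ω * t))
    -- g is unpredictable with sequences {t_n}, {u_n}
    (hgu : UniformContinuous g) (hMg : ∀ t, ‖g t‖ ≤ Mg)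
    (ε₀ δ : ℝ) (hε₀ : 0 < ε₀) (hδ : 0 < δ) (tseq useq : ℕ → ℝ)
    (htseq : Tendsto tseq atTop atTop) (huseq : Tendsto useq atTop atTop)
    (hconv : ∀ α β : ℝ, ∀ ε > (0:ℝ), ∃ N : ℕ, ∀ n ≥ N, ∀ t ∈ Set.Icc α β,
      ‖g (t + tseq n) - g t‖ < ε)
    (hsep : ∀ n : ℕ, ∀ t ∈ Set.Icc (useq n - δ) (useq n + δ),
      ε₀ ≤ ‖g (t + tseq n) - g t‖)
    -- φ is the bounded solution
    (φ : ℝ → EuclideanSpace ℝ (Fin m)) (hφc : Continuous φ) (hφb : ∃ C, ∀ t, ‖φ t‖ ≤ C)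
    (hφ : ∀ t, φ t = ∫ s in Set.Iic t,
      NormedSpace.exp ((t - s) • A) (f (φ (s - τ)) + g s)) :
    ∀ α β : ℝ, ∀ ε > (0:ℝ), ∃ N : ℕ, ∀ n ≥ N, ∀ t ∈ Set.Icc α β,
      ‖φ (t + tseq n) - φ t‖ < ε :=
  unpredictable_stmt10_general A f g Mf Lf Mg K ω τ hMf hLf hω hτ hC3 hA hgu hMg tseq hconv φ hφc
    hφb hφ
end

section
/- Let {ζ*_i} be a sequence in [0,1] and suppose |ζ*_{j_n + k_n} - ζ*_{k_n}| ≥ ε₀ for some positive integers j_n, k_n and ε₀ > 0. Define p(t) = ζ*_i for t ∈ [i, i+1) and ψ(t) = ∫_{-∞}^t e^{-2(t-s)} p(s) ds. Then sup_{t ∈ [k_n, k_n + 1]} |ψ(t + j_n) - ψ(t)| ≥ ε₀/4. -/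
open MeasureTheory Set Real

lemma up_intervalIntegral_exp2 (a b : ℝ) :
    ∫ x in a..b, Real.exp (2 * x) = Real.exp (2 * b) / 2 - Real.exp (2 * a) / 2 := by
  have hderiv : ∀ x ∈ Set.uIcc a b, HasDerivAt (fun y => Real.exp (2 * y) / 2)
      (Real.exp (2 * x)) x := by
    intro x _
    have h := ((Real.hasDerivAt_exp (2 * x)).comp x ((hasDerivAt_id x).const_mul 2)).div_const 2
    simpa [mul_comm, mul_div_assoc] using h
  have hint : IntervalIntegrable (fun x => Real.exp (2 * x)) volume a b := by
    apply Continuous.intervalIntegrable; continuity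
  simpa using intervalIntegral.integral_eq_sub_of_hasDerivAt hderiv hint

lemma up_integrableOn_exp2_Iic (t : ℝ) : IntegrableOn (fun s => Real.exp (2 * s)) (Set.Iic t) := by
  refine Integrable.mono' ((integrableOn_exp_Iic t).const_mul (Real.exp t))
    ((measurable_id.const_mul (2:ℝ)).exp.aestronglyMeasurable) ?_
  filter_upwards [ae_restrict_mem measurableSet_Iic] with s hs
  rw [Real.norm_eq_abs, abs_of_pos (Real.exp_pos _), two_mul, Real.exp_add]
  exact mul_le_mul_of_nonneg_right (Real.exp_le_exp.2 hs) (Real.exp_pos _).le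

lemma up_integral_exp2_Iic (t : ℝ) :
    ∫ s in Set.Iic t, Real.exp (2 * s) = Real.exp (2 * t) / 2 := by
  refine tendsto_nhds_unique
    (intervalIntegral_tendsto_integral_Iic _ (up_integrableOn_exp2_Iic t) Filter.tendsto_id) ?_
  simp_rw [up_intervalIntegral_exp2]
  have : Filter.Tendsto (fun y : ℝ => Real.exp (2 * y) / 2) Filter.atBot (nhds 0) := by
    have h1 : Filter.Tendsto (fun y : ℝ => 2 * y) Filter.atBot Filter.atBot :=
      Filter.tendsto_atBot_atBot.2 fun b => ⟨b / 2, fun a ha => by linarith⟩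
    simpa using (Real.tendsto_exp_atBot.comp h1).div_const 2
  have := Filter.Tendsto.const_sub (Real.exp (2 * t) / 2) this
  simpa using this

lemma up_meas (ζ : ℤ → ℝ) : Measurable fun s : ℝ => ζ ⌊s⌋ :=
  measurable_from_top.comp Int.measurable_floor

lemma up_integrable (ζ : ℤ → ℝ) (hζ : ∀ i, ζ i ∈ Set.Icc (0:ℝ) 1) (t : ℝ) :
    IntegrableOn (fun s => Real.exp (-2 * (t - s)) * ζ ⌊s⌋) (Set.Iic t) := by
  refine Integrable.mono' ((up_integrableOn_exp2_Iic t).const_mul (Real.exp (-2 * t)))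
    ((((measurable_const.sub measurable_id).const_mul (-2:ℝ)).exp.mul
      (up_meas ζ)).aestronglyMeasurable) ?_
  filter_upwards with s
  rw [Real.norm_eq_abs, abs_mul, abs_of_pos (Real.exp_pos _), ← Real.exp_add]
  have h1 : |ζ ⌊s⌋| ≤ 1 := abs_le.2 ⟨by linarith [(hζ ⌊s⌋).1], (hζ ⌊s⌋).2⟩
  have h2 : -2 * (t - s) = -2 * t + 2 * s := by ring
  rw [h2]
  calc Real.exp (-2 * t + 2 * s) * |ζ ⌊s⌋| ≤ Real.exp (-2 * t + 2 * s) * 1 :=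
        mul_le_mul_of_nonneg_left h1 (Real.exp_pos _).le
    _ = Real.exp (-2 * t + 2 * s) := mul_one _

lemma up_bound (ζ : ℤ → ℝ) (hζ : ∀ i, ζ i ∈ Set.Icc (0:ℝ) 1) (t : ℝ) :
    |∫ s in Set.Iic t, Real.exp (-2 * (t - s)) * ζ ⌊s⌋| ≤ 1 / 2 := by
  have hb : ∀ᵐ s ∂(volume.restrict (Set.Iic t)),
      ‖Real.exp (-2 * (t - s)) * ζ ⌊s⌋‖ ≤ Real.exp (-2 * t) * Real.exp (2 * s) := by
    filter_upwards with s
    rw [Real.norm_eq_abs, abs_mul, abs_of_pos (Real.exp_pos _), ← Real.exp_add]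
    have h1 : |ζ ⌊s⌋| ≤ 1 := abs_le.2 ⟨by linarith [(hζ ⌊s⌋).1], (hζ ⌊s⌋).2⟩
    have h2 : -2 * (t - s) = -2 * t + 2 * s := by ring
    rw [h2]
    nlinarith [Real.exp_pos (-2 * t + 2 * s), abs_nonneg (ζ ⌊s⌋)]
  have := norm_integral_le_of_norm_le ((up_integrableOn_exp2_Iic t).const_mul (Real.exp (-2 * t))) hb
  rw [Real.norm_eq_abs] at this
  refine this.trans ?_
  rw [integral_const_mul, up_integral_exp2_Iic, ← mul_div_assoc, ← Real.exp_add]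
  simp

lemma up_rec (ζ : ℤ → ℝ) (hζ : ∀ i, ζ i ∈ Set.Icc (0:ℝ) 1) (n : ℤ) :
    (∫ s in Set.Iic ((n : ℝ) + 1), Real.exp (-2 * ((n : ℝ) + 1 - s)) * ζ ⌊s⌋)
      = Real.exp (-2) * (∫ s in Set.Iic (n : ℝ), Real.exp (-2 * ((n : ℝ) - s)) * ζ ⌊s⌋)
        + ζ n * ((1 - Real.exp (-2)) / 2) := by
  have hsplit : Set.Iic ((n : ℝ) + 1) = Set.Iic (n : ℝ) ∪ Set.Ioc (n : ℝ) ((n : ℝ) + 1) :=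
    (Set.Iic_union_Ioc_eq_Iic (by linarith)).symm
  rw [hsplit, setIntegral_union (Set.Iic_disjoint_Ioc le_rfl) measurableSet_Ioc
    ((up_integrable ζ hζ ((n : ℝ) + 1)).mono_set (Set.Iic_subset_Iic.2 (by linarith)))
    ((up_integrable ζ hζ ((n : ℝ) + 1)).mono_set (Set.Ioc_subset_Iic_self))]
  congr 1
  · -- first piece
    have heq : ∀ s : ℝ, Real.exp (-2 * ((n : ℝ) + 1 - s)) * ζ ⌊s⌋
        = Real.exp (-2) * (Real.exp (-2 * ((n : ℝ) - s)) * ζ ⌊s⌋) := by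
      intro s
      rw [← mul_assoc, ← Real.exp_add]
      congr 2
      ring
    simp_rw [heq]
    rw [integral_const_mul]
  · -- second piece
    rw [integral_Ioc_eq_integral_Ioo]
    have heq : ∀ s ∈ Set.Ioo (n : ℝ) ((n : ℝ) + 1),
        Real.exp (-2 * ((n : ℝ) + 1 - s)) * ζ ⌊s⌋
          = Real.exp (-2 * ((n : ℝ) + 1)) * Real.exp (2 * s) * ζ n := by
      intro s hs
      have hfl : ⌊s⌋ = n := by
        rw [Int.floor_eq_iff]
        constructor
        · exact hs.1.le
        · push_cast; exact hs.2
      rw [hfl, ← Real.exp_add]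
      congr 2
      ring
    rw [setIntegral_congr_fun measurableSet_Ioo heq]
    have : ∫ s in Set.Ioo (n : ℝ) ((n : ℝ) + 1),
        Real.exp (-2 * ((n : ℝ) + 1)) * Real.exp (2 * s) * ζ n
        = (∫ s in Set.Ioo (n : ℝ) ((n : ℝ) + 1), Real.exp (2 * s))
            * (Real.exp (-2 * ((n : ℝ) + 1)) * ζ n) := by
      simp_rw [show ∀ s : ℝ, Real.exp (-2 * ((n:ℝ) + 1)) * Real.exp (2 * s) * ζ n
          = Real.exp (2 * s) * (Real.exp (-2 * ((n:ℝ) + 1)) * ζ n) from fun s => by ring]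
      rw [integral_mul_const]
    rw [this, ← integral_Ioc_eq_integral_Ioo,
      ← intervalIntegral.integral_of_le (by linarith : (n:ℝ) ≤ (n:ℝ) + 1),
      up_intervalIntegral_exp2]
    have e1 : Real.exp (-2 * ((n:ℝ) + 1)) * Real.exp (2 * ((n:ℝ) + 1)) = 1 := by
      rw [← Real.exp_add]; norm_num
    have e2 : Real.exp (-2 * ((n:ℝ) + 1)) * Real.exp (2 * (n:ℝ)) = Real.exp (-2) := by
      rw [← Real.exp_add]; congr 1; ring
    linear_combination (ζ n / 2) * e1 - (ζ n / 2) * e2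

/-- If `|ζ*_{j_n+k_n} - ζ*_{k_n}| ≥ ε₀`, then the bounded solution
`ψ(t) = ∫_{-∞}^t e^{-2(t-s)} p(s) ds` of `v' = -2v + p`, with `p(t) = ζ*_⌊t⌋`, satisfies
`sup_{t ∈ [k_n, k_n+1]} |ψ(t + j_n) - ψ(t)| ≥ ε₀ / 4`. -/
theorem unpredictable_stmt14 (ζ : ℤ → ℝ) (hζ : ∀ i, ζ i ∈ Set.Icc (0:ℝ) 1)
    (ε₀ : ℝ) (hε₀ : 0 < ε₀) (j k : ℕ) (hj : 0 < j) (hk : 0 < k)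
    (hsep : ε₀ ≤ |ζ ((j : ℤ) + (k : ℤ)) - ζ (k : ℤ)|) :
    ε₀ / 4 ≤ ⨆ t : Set.Icc (k : ℝ) ((k : ℝ) + 1),
      |(∫ s in Set.Iic ((t : ℝ) + (j : ℝ)), Real.exp (-2 * ((t : ℝ) + (j : ℝ) - s)) * ζ ⌊s⌋) -
        ∫ s in Set.Iic (t : ℝ), Real.exp (-2 * ((t : ℝ) - s)) * ζ ⌊s⌋| := by
  set ψ : ℝ → ℝ := fun t => ∫ s in Set.Iic t, Real.exp (-2 * (t - s)) * ζ ⌊s⌋ with hψ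
  set F : Set.Icc (k : ℝ) ((k : ℝ) + 1) → ℝ := fun t => |ψ ((t : ℝ) + (j : ℝ)) - ψ (t : ℝ)|
    with hF
  have hFeq : (⨆ t : Set.Icc (k : ℝ) ((k : ℝ) + 1),
      |(∫ s in Set.Iic ((t : ℝ) + (j : ℝ)), Real.exp (-2 * ((t : ℝ) + (j : ℝ) - s)) * ζ ⌊s⌋) -
        ∫ s in Set.Iic (t : ℝ), Real.exp (-2 * ((t : ℝ) - s)) * ζ ⌊s⌋|) = ⨆ t, F t := rfl
  rw [hFeq]
  have hbdd : BddAbove (Set.range F) := by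
    refine ⟨1, ?_⟩
    rintro x ⟨t, rfl⟩
    have h1 := up_bound ζ hζ ((t : ℝ) + (j : ℝ))
    have h2 := up_bound ζ hζ (t : ℝ)
    calc F t ≤ |ψ ((t : ℝ) + (j : ℝ))| + |ψ (t : ℝ)| := abs_sub _ _
      _ ≤ 1 := by rw [hψ]; dsimp only; linarith
  have hmem1 : (k : ℝ) ∈ Set.Icc (k : ℝ) ((k : ℝ) + 1) := ⟨le_rfl, by linarith⟩
  have hmem2 : (k : ℝ) + 1 ∈ Set.Icc (k : ℝ) ((k : ℝ) + 1) := ⟨by linarith, le_rfl⟩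
  have hle1 : F ⟨(k : ℝ), hmem1⟩ ≤ ⨆ t, F t := le_ciSup hbdd _
  have hle2 : F ⟨(k : ℝ) + 1, hmem2⟩ ≤ ⨆ t, F t := le_ciSup hbdd _
  -- recursion at k and j+k
  have hreck : ψ ((k : ℝ) + 1) = Real.exp (-2) * ψ (k : ℝ)
      + ζ (k : ℤ) * ((1 - Real.exp (-2)) / 2) := by
    have h := up_rec ζ hζ (k : ℤ)
    simp only [Int.cast_natCast] at h
    exact h
  have hrecjk : ψ ((k : ℝ) + 1 + (j : ℝ)) = Real.exp (-2) * ψ ((k : ℝ) + (j : ℝ))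
      + ζ ((j : ℤ) + (k : ℤ)) * ((1 - Real.exp (-2)) / 2) := by
    have h := up_rec ζ hζ ((j : ℤ) + (k : ℤ))
    have e1 : (((j : ℤ) + (k : ℤ) : ℤ) : ℝ) + 1 = (k : ℝ) + 1 + (j : ℝ) := by push_cast; ring
    have e2 : (((j : ℤ) + (k : ℤ) : ℤ) : ℝ) = (k : ℝ) + (j : ℝ) := by push_cast; ring
    rw [e1, e2] at h
    exact h
  set E := Real.exp (-2) with hE
  have hE0 : 0 < E := Real.exp_pos _
  have hE3 : E ≤ 1 / 3 := by
    rw [hE, Real.exp_neg]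
    rw [inv_le_comm₀ (Real.exp_pos 2) (by norm_num)]
    calc (1 / 3 : ℝ)⁻¹ = 3 := by norm_num
      _ ≤ Real.exp 2 := by linarith [Real.add_one_le_exp (2 : ℝ)]
  have hkey : ε₀ * ((1 - E) / 2) ≤ (1 + E) * (⨆ t, F t) := by
    have hd : |ζ ((j : ℤ) + (k : ℤ)) - ζ (k : ℤ)| * ((1 - E) / 2)
        = |(ψ ((k : ℝ) + 1 + (j : ℝ)) - ψ ((k : ℝ) + 1))
            - E * (ψ ((k : ℝ) + (j : ℝ)) - ψ (k : ℝ))| := by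
      rw [hrecjk, hreck]
      rw [show Real.exp (-2) * ψ ((k : ℝ) + (j : ℝ)) + ζ ((j : ℤ) + (k : ℤ)) * ((1 - Real.exp (-2)) / 2)
          - (Real.exp (-2) * ψ (k : ℝ) + ζ (k : ℤ) * ((1 - Real.exp (-2)) / 2))
          - E * (ψ ((k : ℝ) + (j : ℝ)) - ψ (k : ℝ))
          = (ζ ((j : ℤ) + (k : ℤ)) - ζ (k : ℤ)) * ((1 - E) / 2) from by rw [hE]; ring]
      rw [abs_mul, abs_of_nonneg (by linarith : (0:ℝ) ≤ (1 - E) / 2)]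
    have htri : |(ψ ((k : ℝ) + 1 + (j : ℝ)) - ψ ((k : ℝ) + 1))
        - E * (ψ ((k : ℝ) + (j : ℝ)) - ψ (k : ℝ))|
        ≤ F ⟨(k : ℝ) + 1, hmem2⟩ + E * F ⟨(k : ℝ), hmem1⟩ := by
      have := abs_sub (ψ ((k : ℝ) + 1 + (j : ℝ)) - ψ ((k : ℝ) + 1))
        (E * (ψ ((k : ℝ) + (j : ℝ)) - ψ (k : ℝ)))
      rw [abs_mul, abs_of_pos hE0] at this
      exact this
    have hS0 : 0 ≤ ⨆ t, F t := le_trans (abs_nonneg _) hle1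
    calc ε₀ * ((1 - E) / 2)
        ≤ |ζ ((j : ℤ) + (k : ℤ)) - ζ (k : ℤ)| * ((1 - E) / 2) :=
          mul_le_mul_of_nonneg_right hsep (by linarith)
      _ = _ := hd
      _ ≤ F ⟨(k : ℝ) + 1, hmem2⟩ + E * F ⟨(k : ℝ), hmem1⟩ := htri
      _ ≤ (⨆ t, F t) + E * (⨆ t, F t) := by
          gcongr
      _ = (1 + E) * (⨆ t, F t) := by ring
  have hS0 : 0 ≤ ⨆ t, F t := le_trans (abs_nonneg _) hle1
  nlinarith [mul_nonneg hε₀.le (by linarith : (0:ℝ) ≤ 1/3 - E),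
    mul_nonneg hS0 (by linarith : (0:ℝ) ≤ 1/3 - E)]
end

section
/- Let (X, d_X) and (Y, d_Y) be compact metric spaces, h : X → Y a homeomorphism, and F : X → X, G : Y → Y maps with h ∘ F = G ∘ h. If a sequence {κ_i} in X (given by κ_{i+1} = F(κ_i)) is unpredictable, then {h(κ_i)} is an unpredictable sequence in Y. -/
open Filter

/-- A bounded sequence `κ` in a metric space is unpredictable if there exist `ε₀ > 0` and
sequences `j_n, k_n → ∞` of positive integers with `d(κ_{i+j_n}, κ_i) → 0` for each `i` and
`d(κ_{j_n+k_n}, κ_{k_n}) ≥ ε₀`. -/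
def UnpredictableSeq {X : Type*} [MetricSpace X] (κ : ℕ → X) : Prop :=
  (∃ x₀ : X, ∃ C : ℝ, ∀ i, dist (κ i) x₀ ≤ C) ∧
  ∃ ε₀ : ℝ, 0 < ε₀ ∧ ∃ j k : ℕ → ℕ, (∀ n, 0 < j n) ∧ (∀ n, 0 < k n) ∧
    Tendsto j atTop atTop ∧ Tendsto k atTop atTop ∧
    (∀ i : ℕ, Tendsto (fun n => dist (κ (i + j n)) (κ i)) atTop (nhds 0)) ∧
    (∀ n, ε₀ ≤ dist (κ (j n + k n)) (κ (k n)))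

/-- Unpredictability of orbits is preserved under topological conjugacy of maps on compact
metric spaces. -/
theorem unpredictable_stmt17 {X Y : Type*} [MetricSpace X] [MetricSpace Y]
    [CompactSpace X] [CompactSpace Y] (h : X ≃ₜ Y) (F : X → X) (G : Y → Y)
    (hcomm : ∀ x, h (F x) = G (h x))
    (κ : ℕ → X) (horbit : ∀ i, κ (i + 1) = F (κ i))
    (hκ : UnpredictableSeq κ) :
    UnpredictableSeq (fun i => h (κ i)) := by
  obtain ⟨-, ε₀, hε₀, j, k, hj, hk, hjt, hkt, hconv, hsep⟩ := hκ
  have hucont : UniformContinuous (h : X → Y) :=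
    CompactSpace.uniformContinuous_of_continuous h.continuous
  have hucont' : UniformContinuous (h.symm : Y → X) :=
    CompactSpace.uniformContinuous_of_continuous h.symm.continuous
  constructor
  · obtain ⟨r, hr⟩ := (isCompact_univ : IsCompact (Set.univ : Set Y)).isBounded.subset_closedBall
      (h (κ 0))
    exact ⟨h (κ 0), r, fun i => (Metric.mem_closedBall.mp (hr (Set.mem_univ _)))⟩
  · obtain ⟨δ, hδ, hδ'⟩ := Metric.uniformContinuous_iff.mp hucont' ε₀ hε₀
    refine ⟨δ, hδ, j, k, hj, hk, hjt, hkt, ?_, ?_⟩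
    · intro i
      rw [Metric.tendsto_atTop]
      intro ε hε
      obtain ⟨δ₂, hδ₂, hδ₂'⟩ := Metric.uniformContinuous_iff.mp hucont ε hε
      have := Metric.tendsto_atTop.mp (hconv i) δ₂ hδ₂
      obtain ⟨N, hN⟩ := this
      refine ⟨N, fun n hn => ?_⟩
      have h1 := hN n hn
      rw [Real.dist_eq, sub_zero, abs_of_nonneg dist_nonneg] at h1 ⊢
      exact hδ₂' h1
    · intro n
      by_contra hlt
      push_neg at hlt
      have := hδ' hlt
      simp only [Homeomorph.symm_apply_apply] at this
      exact absurd (hsep n) (not_le.mpr this)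
end

section
/- Let φ : ℝ → ℝ^m be bounded by M_φ and satisfy φ'(t) = Aφ(t) + f(φ(t-τ)) + g(t), with f Lipschitz with constant L_f, ‖g‖ ≤ M_g, and suppose sup_{t ∈ [u-δ̃-τ, u+δ̃]} ‖φ(t+T) - φ(t)‖ = ‖φ(T+η) - φ(η)‖ ≥ 2ε̄₀ for some η in that interval. Then for δ = ε̄₀ / (2(M_φ‖A‖ + M_φ L_f + M_g)) and all t ∈ [η - δ, η + δ], one has ‖φ(t+T) - φ(t)‖ ≥ ε̄₀. -/
/-- If a bounded solution `φ` of the delay equation `x' = Ax + f(x(t-τ)) + g(t)` attains, on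
`[u - δ̃ - τ, u + δ̃]`, a supremum `‖φ(T+η) - φ(η)‖ ≥ 2 ε̄₀` of `‖φ(·+T) - φ(·)‖` at `η`, then
for `δ = ε̄₀ / (2(M_φ‖A‖ + M_φ L_f + M_g))` the lower bound `‖φ(t+T) - φ(t)‖ ≥ ε̄₀` holds
throughout `[η - δ, η + δ]`. -/
theorem unpredictable_stmt19 {m : ℕ}
    (A : EuclideanSpace ℝ (Fin m) →L[ℝ] EuclideanSpace ℝ (Fin m))
    (f : EuclideanSpace ℝ (Fin m) → EuclideanSpace ℝ (Fin m))
    (g : ℝ → EuclideanSpace ℝ (Fin m))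
    (φ : ℝ → EuclideanSpace ℝ (Fin m))
    (Mφ Lf Mg T τ δt u η ε : ℝ)
    (hMφ : ∀ t, ‖φ t‖ ≤ Mφ)
    (hLf : ∀ x y, ‖f x - f y‖ ≤ Lf * ‖x - y‖)
    (hMg : ∀ t, ‖g t‖ ≤ Mg)
    (hT : 0 < T) (hτ : 0 < τ) (hδt : 0 < δt) (hε : 0 < ε)
    (hode : ∀ t, HasDerivAt φ (A (φ t) + f (φ (t - τ)) + g t) t)
    (hη : η ∈ Set.Icc (u - δt - τ) (u + δt))
    (hsup : ∀ t ∈ Set.Icc (u - δt - τ) (u + δt), ‖φ (t + T) - φ t‖ ≤ ‖φ (T + η) - φ η‖)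
    (hsep : 2 * ε ≤ ‖φ (T + η) - φ η‖) :
    ∀ t ∈ Set.Icc (η - ε / (2 * (Mφ * ‖A‖ + Mφ * Lf + Mg)))
        (η + ε / (2 * (Mφ * ‖A‖ + Mφ * Lf + Mg))),
      ε ≤ ‖φ (t + T) - φ t‖ := by
  intro t ht
  have hMφ0 : 0 ≤ Mφ := (norm_nonneg _).trans (hMφ 0)
  have hMg0 : 0 ≤ Mg := (norm_nonneg _).trans (hMg 0)
  have hψη : (0:ℝ) < ‖φ (T + η) - φ η‖ := lt_of_lt_of_le (by linarith) hsep
  have hLf0 : 0 ≤ Lf := by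
    have h1 := (norm_nonneg (f (φ (T + η)) - f (φ η))).trans (hLf (φ (T + η)) (φ η))
    nlinarith
  set K : ℝ := Mφ * ‖A‖ + Mφ * Lf + Mg with hKdef
  have hK0 : 0 ≤ K := by positivity
  have hηT : φ (T + η) = φ (η + T) := by rw [add_comm]
  rcases hK0.eq_or_lt with hKz | hKpos
  · -- K = 0 : the interval degenerates to {η}
    have hδ : ε / (2 * K) = 0 := by rw [← hKz]; simp
    rw [hδ] at ht
    have htη : t = η := le_antisymm (by simpa using ht.2) (by simpa using ht.1)
    rw [htη, ← hηT]; linarith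
  · -- derivative of ψ s = φ (s+T) - φ s
    have hψ : ∀ s : ℝ, HasDerivAt (fun r => φ (r + T) - φ r)
        ((A (φ (s + T)) + f (φ (s + T - τ)) + g (s + T))
          - (A (φ s) + f (φ (s - τ)) + g s)) s := by
      intro s
      exact ((hode (s + T)).comp_add_const s T).sub (hode s)
    have hbound : ∀ s : ℝ, ‖(A (φ (s + T)) + f (φ (s + T - τ)) + g (s + T))
          - (A (φ s) + f (φ (s - τ)) + g s)‖ ≤ 2 * K := by
      intro s
      have hA : ‖A (φ (s + T)) - A (φ s)‖ ≤ 2 * (Mφ * ‖A‖) := by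
        calc ‖A (φ (s + T)) - A (φ s)‖ ≤ ‖A (φ (s + T))‖ + ‖A (φ s)‖ := norm_sub_le _ _
          _ ≤ ‖A‖ * Mφ + ‖A‖ * Mφ := by
              gcongr <;> exact (A.le_opNorm _).trans
                (mul_le_mul_of_nonneg_left (hMφ _) (norm_nonneg A))
          _ = 2 * (Mφ * ‖A‖) := by ring
      have hf : ‖f (φ (s + T - τ)) - f (φ (s - τ))‖ ≤ 2 * (Mφ * Lf) := by
        calc ‖f (φ (s + T - τ)) - f (φ (s - τ))‖ ≤ Lf * ‖φ (s + T - τ) - φ (s - τ)‖ :=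
              hLf _ _
          _ ≤ Lf * (Mφ + Mφ) := by
              gcongr
              exact (norm_sub_le _ _).trans (by gcongr <;> exact hMφ _)
          _ = 2 * (Mφ * Lf) := by ring
      have hg : ‖g (s + T) - g s‖ ≤ 2 * Mg := by
        calc ‖g (s + T) - g s‖ ≤ ‖g (s + T)‖ + ‖g s‖ := norm_sub_le _ _
          _ ≤ Mg + Mg := by gcongr <;> exact hMg _
          _ = 2 * Mg := by ring
      calc ‖(A (φ (s + T)) + f (φ (s + T - τ)) + g (s + T))
            - (A (φ s) + f (φ (s - τ)) + g s)‖
          = ‖(A (φ (s + T)) - A (φ s)) + (f (φ (s + T - τ)) - f (φ (s - τ)))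
              + (g (s + T) - g s)‖ := by congr 1; abel
        _ ≤ ‖(A (φ (s + T)) - A (φ s)) + (f (φ (s + T - τ)) - f (φ (s - τ)))‖
              + ‖g (s + T) - g s‖ := norm_add_le _ _
        _ ≤ (‖A (φ (s + T)) - A (φ s)‖ + ‖f (φ (s + T - τ)) - f (φ (s - τ))‖)
              + ‖g (s + T) - g s‖ := by gcongr; exact norm_add_le _ _
        _ ≤ (2 * (Mφ * ‖A‖) + 2 * (Mφ * Lf)) + 2 * Mg := by gcongr
        _ = 2 * K := by rw [hKdef]; ring
    have hmvt := convex_univ.norm_image_sub_le_of_norm_hasDerivWithin_le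
        (f := fun r => φ (r + T) - φ r)
        (fun s _ => (hψ s).hasDerivWithinAt) (fun s _ => hbound s)
        (Set.mem_univ η) (Set.mem_univ t)
    have habs : ‖t - η‖ ≤ ε / (2 * K) := by
      rw [Real.norm_eq_abs, abs_le]
      exact ⟨by linarith [ht.1], by linarith [ht.2]⟩
    have h2K : (0:ℝ) < 2 * K := by linarith
    have hle : ‖(φ (t + T) - φ t) - (φ (η + T) - φ η)‖ ≤ ε := by
      calc ‖(φ (t + T) - φ t) - (φ (η + T) - φ η)‖ ≤ 2 * K * ‖t - η‖ := hmvt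
        _ ≤ 2 * K * (ε / (2 * K)) := by gcongr
        _ = ε := by field_simp
    have hlo : ‖φ (η + T) - φ η‖ - ‖φ (t + T) - φ t‖
        ≤ ‖(φ (t + T) - φ t) - (φ (η + T) - φ η)‖ := by
      exact (norm_sub_norm_le _ _).trans (norm_sub_rev _ _).le
    rw [hηT] at hsep
    linarith
end
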